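/- Let n ≥ 1, let Σ be an n×n real symmetric positive semidefinite matrix and Ω an n×n real symmetric positive definite matrix. For every invertible real n×n matrix L with L Lᵀ = Ω, one has (L⁻¹)ᵀ · √(Lᵀ Σ L) · L⁻¹ = Λ_kyle(Σ,Ω). In particular, the matrix (L⁻¹)ᵀ √(Lᵀ Σ L) L⁻¹ does not depend on the choice of the factorization L of Ω. -/

import Mathlib

open Matrix
open scoped Classical

/-- `sqrtm A` is the unique symmetric positive semidefinite square root of a
symmetric positive semidefinite real matrix `A` (junk value `0` otherwise). -/
noncomputable def sqrtm {n : ℕ} (A : Matrix (Fin n) (Fin n) ℝ) : Matrix (Fin n) (Fin n) ℝ :=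
  if h : A.PosSemidef then
    (h.1.eigenvectorUnitary : Matrix (Fin n) (Fin n) ℝ) *
      diagonal ((↑) ∘ (√·) ∘ h.1.eigenvalues) *
      (star h.1.eigenvectorUnitary : Matrix (Fin n) (Fin n) ℝ)
  else 0

/-- The Kyle cross-impact matrix `Λ_kyle(Σ,Ω) = (√Ω)⁻¹ √(√Ω Σ √Ω) (√Ω)⁻¹`. -/
noncomputable def kyle {n : ℕ} (S W : Matrix (Fin n) (Fin n) ℝ) : Matrix (Fin n) (Fin n) ℝ :=
  (sqrtm W)⁻¹ * sqrtm (sqrtm W * S * sqrtm W) * (sqrtm W)⁻¹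

/-!
Write `L = M U` with `U := M⁻¹ L`. If `L Lᵀ = M Mᵀ` then `U` is orthogonal, and the square
root commutes with orthogonal conjugation: `√(Uᵀ A U) = Uᵀ √A U`, because the right-hand side
is positive semidefinite and squares to `Uᵀ A U`. The factors `U` then cancel against
`L⁻¹ = Uᵀ M⁻¹`, so `(L⁻¹)ᵀ √(Lᵀ Σ L) L⁻¹` only depends on `L Lᵀ`. Taking `M = √Ω`, which is
symmetric, gives the Kyle matrix.
-/

section Sqrtm

open scoped MatrixOrder

variable {n : ℕ} {A B U : Matrix (Fin n) (Fin n) ℝ}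

theorem sqrtm_eq_cfcSqrt (hA : A.PosSemidef) : sqrtm A = CFC.sqrt A := by
  rw [sqrtm, dif_pos hA, CFC.sqrt_eq_cfc, cfc_nnreal_eq_real _ A, hA.1.cfc_eq]
  simp only [IsHermitian.cfc, Unitary.conjStarAlgAut_apply]
  congr 3
  funext i
  simp [Real.coe_sqrt, Real.coe_toNNReal', max_eq_left (hA.eigenvalues_nonneg i)]

theorem posSemidef_sqrtm (hA : A.PosSemidef) : (sqrtm A).PosSemidef := by
  rw [sqrtm_eq_cfcSqrt hA]
  exact (CFC.sqrt_nonneg A).posSemidef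

theorem sqrtm_mul_self (hA : A.PosSemidef) : sqrtm A * sqrtm A = A := by
  rw [sqrtm_eq_cfcSqrt hA]
  exact CFC.sqrt_mul_sqrt_self A hA.nonneg

theorem transpose_sqrtm (hA : A.PosSemidef) : (sqrtm A)ᵀ = sqrtm A := by
  simpa only [conjTranspose_eq_transpose_of_trivial] using (posSemidef_sqrtm hA).1.eq

theorem sqrtm_eq_of_mul_self_eq (hB : B.PosSemidef) (hBA : B * B = A) : sqrtm A = B := by
  have hA : A.PosSemidef := by
    simpa only [← hBA, hB.1.eq] using posSemidef_conjTranspose_mul_self B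
  rw [sqrtm_eq_cfcSqrt hA]
  exact CFC.sqrt_unique hBA hB.nonneg

theorem sqrtm_transpose_mul_mul_of_mul_transpose_eq_one (hU : U * Uᵀ = 1)
    (hA : A.PosSemidef) : sqrtm (Uᵀ * A * U) = Uᵀ * sqrtm A * U := by
  refine sqrtm_eq_of_mul_self_eq ?_ ?_
  · simpa only [conjTranspose_eq_transpose_of_trivial] using
      (posSemidef_sqrtm hA).conjTranspose_mul_mul_same U
  · calc Uᵀ * sqrtm A * U * (Uᵀ * sqrtm A * U)
        = Uᵀ * sqrtm A * (U * Uᵀ) * sqrtm A * U := by simp only [Matrix.mul_assoc]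
      _ = Uᵀ * A * U := by
        rw [hU, Matrix.mul_one, Matrix.mul_assoc Uᵀ, sqrtm_mul_self hA]

theorem isUnit_det_sqrtm (hA : A.PosDef) : IsUnit (sqrtm A).det := by
  have hAunit : IsUnit (sqrtm A * sqrtm A) := by
    rw [sqrtm_mul_self hA.posSemidef]
    exact hA.isUnit
  exact (isUnit_iff_isUnit_det _).mp (isUnit_of_mul_isUnit_left hAunit)

end Sqrtm

theorem transpose_inv_mul_sqrtm_mul_inv_eq_of_mul_transpose_eq {n : ℕ}
    {S L M : Matrix (Fin n) (Fin n) ℝ} (hS : S.PosSemidef) (hL : IsUnit L.det)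
    (hM : IsUnit M.det) (hLM : L * Lᵀ = M * Mᵀ) :
    (L⁻¹)ᵀ * sqrtm (Lᵀ * S * L) * L⁻¹ = (M⁻¹)ᵀ * sqrtm (Mᵀ * S * M) * M⁻¹ := by
  set U := M⁻¹ * L
  have hLU : L = M * U := by
    rw [← Matrix.mul_assoc, mul_nonsing_inv _ hM, Matrix.one_mul]
  have hU : U * Uᵀ = 1 := by
    calc U * Uᵀ = M⁻¹ * (L * Lᵀ) * (M⁻¹)ᵀ := by
          simp only [U, transpose_mul, Matrix.mul_assoc]
      _ = 1 := by
        rw [hLM, ← Matrix.mul_assoc, nonsing_inv_mul _ hM, Matrix.one_mul, ← transpose_mul,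
          nonsing_inv_mul _ hM, transpose_one]
  have hUL : U * L⁻¹ = M⁻¹ := by
    rw [Matrix.mul_assoc, mul_nonsing_inv _ hL, Matrix.mul_one]
  have hMSM : (Mᵀ * S * M).PosSemidef := by
    simpa only [conjTranspose_eq_transpose_of_trivial] using hS.conjTranspose_mul_mul_same M
  have hLSL : Lᵀ * S * L = Uᵀ * (Mᵀ * S * M) * U := by
    rw [hLU, transpose_mul]
    simp only [Matrix.mul_assoc]
  rw [hLSL, sqrtm_transpose_mul_mul_of_mul_transpose_eq_one hU hMSM]
  calc (L⁻¹)ᵀ * (Uᵀ * sqrtm (Mᵀ * S * M) * U) * L⁻¹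
      = (U * L⁻¹)ᵀ * sqrtm (Mᵀ * S * M) * (U * L⁻¹) := by
        simp only [transpose_mul, Matrix.mul_assoc]
    _ = (M⁻¹)ᵀ * sqrtm (Mᵀ * S * M) * M⁻¹ := by rw [hUL]

theorem kyle_factorization_independent_general {n : ℕ}
    (S W : Matrix (Fin n) (Fin n) ℝ) (hS : S.PosSemidef) (hW : W.PosDef)
    (L : Matrix (Fin n) (Fin n) ℝ) (hL : IsUnit L.det) (hLW : L * Lᵀ = W) :
    (L⁻¹)ᵀ * sqrtm (Lᵀ * S * L) * L⁻¹ = kyle S W := by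
  have hQ : (sqrtm W)ᵀ = sqrtm W := transpose_sqrtm hW.posSemidef
  have hLQ : L * Lᵀ = sqrtm W * (sqrtm W)ᵀ := by
    rw [hQ, sqrtm_mul_self hW.posSemidef, hLW]
  rw [transpose_inv_mul_sqrtm_mul_inv_eq_of_mul_transpose_eq hS hL (isUnit_det_sqrtm hW) hLQ,
    transpose_nonsing_inv, hQ, kyle]

/-- `(L⁻¹)ᵀ √(Lᵀ Σ L) L⁻¹` does not depend on the factorization `L Lᵀ = Ω`
and equals the Kyle matrix. -/
theorem kyle_factorization_independent {n : ℕ} (hn : 1 ≤ n)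
    (S W : Matrix (Fin n) (Fin n) ℝ) (hS : S.PosSemidef) (hW : W.PosDef)
    (L : Matrix (Fin n) (Fin n) ℝ) (hL : IsUnit L.det) (hLW : L * Lᵀ = W) :
    (L⁻¹)ᵀ * sqrtm (Lᵀ * S * L) * L⁻¹ = kyle S W :=
  kyle_factorization_independent_general S W hS hW L hL hLW
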